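/- Let N be a positive integer, let K and K̃ be N×N real symmetric positive semidefinite matrices; let λ > 0; let k, k̃ ∈ ℝ^N satisfy |k̃ᵢ − kᵢ| ≤ ε̃ for every index i, where ε̃ ≥ 0; let c, c̃ ∈ ℝ satisfy |c − c̃| ≤ ε̃; let y ∈ ℝ^N, let f ∈ ℝ, let B, R ≥ 0 and δ ∈ (0,1). Define μ := kᵀ(K + λI)⁻¹ y and μ̃ := k̃ᵀ(K̃ + λI)⁻¹ y, σ² := c − kᵀ(K + λI)⁻¹ k and σ̃² := c̃ − k̃ᵀ(K̃ + λI)⁻¹ k̃, W := √(N + 2√N·√(log(1/δ)) + 2·log(1/δ)), C := (1/λ + ‖(K + λI)⁻¹‖)·(‖k‖ + √N·ε̃) + ‖(K + λI)⁻¹‖·√N·ε̃, and S² := ε̃ + √N·ε̃·‖(K + λI)⁻¹ k‖ + (√N·ε̃ + ‖k‖)·C. Assume σ̃² ≥ 0. If |μ̃ − f| ≤ B·√(σ̃²) + R·‖(K̃ + λI)⁻¹ k̃‖·W, then |μ − f| ≤ B·√(σ² + S²) + C·‖y‖ + R·(‖(K + λI)⁻¹ k‖ + C)·W. -/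

import Mathlib

/-!
Write `u = (K + λI)⁻¹ k` and `ũ = (K̃ + λI)⁻¹ k̃`. Since `K̃` is positive semidefinite,
`λ ‖(K̃ + λI)⁻¹ v‖ ≤ ‖v‖`, so `‖ũ‖ ≤ (‖k‖ + √N ε̃) / λ`, and the triangle inequality gives the crude
bound `‖ũ - u‖ ≤ C`. By symmetry of the kernel matrices `μ = u ⬝ y` and `μ̃ = ũ ⬝ y`, so
`|μ - μ̃| ≤ C ‖y‖`; Cauchy–Schwarz gives `σ̃² ≤ σ² + S²` and `‖ũ‖ ≤ ‖u‖ + C`. The claim then follows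
from `|μ - f| ≤ |μ - μ̃| + |μ̃ - f|` and the monotonicity of `√`.
-/

open Matrix MeasureTheory

/-- Operator norm of an `N × N` real matrix induced by the Euclidean norm on `ℝ^N`. -/
noncomputable def opNorm {N : ℕ} (M : Matrix (Fin N) (Fin N) ℝ) : ℝ :=
  ‖Matrix.toEuclideanCLM (𝕜 := ℝ) M‖

/-- Euclidean norm of a vector in `ℝ^N`. -/
noncomputable def evnorm {N : ℕ} (v : Fin N → ℝ) : ℝ :=
  Real.sqrt (∑ i, (v i) ^ 2)

/-- The constant `C = (1/λ + ‖(K+λI)⁻¹‖)(‖k‖ + √N ε̃) + ‖(K+λI)⁻¹‖ √N ε̃`. -/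
noncomputable def Cbound {N : ℕ} (K : Matrix (Fin N) (Fin N) ℝ) (k : Fin N → ℝ)
    (lam ε : ℝ) : ℝ :=
  (1 / lam + opNorm (K + lam • 1)⁻¹) * (evnorm k + Real.sqrt N * ε) +
    opNorm (K + lam • 1)⁻¹ * (Real.sqrt N * ε)

/-- The constant `S² = ε̃ + √N ε̃ ‖(K+λI)⁻¹ k‖ + (√N ε̃ + ‖k‖) C`. -/
noncomputable def Ssq {N : ℕ} (K : Matrix (Fin N) (Fin N) ℝ) (k : Fin N → ℝ)
    (lam ε : ℝ) : ℝ :=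
  ε + Real.sqrt N * ε * evnorm ((K + lam • 1)⁻¹ *ᵥ k) +
    (Real.sqrt N * ε + evnorm k) * Cbound K k lam ε

section Evnorm

variable {N : ℕ}

lemma evnorm_eq_norm_toLp (v : Fin N → ℝ) :
    evnorm v = ‖(WithLp.toLp 2 v : EuclideanSpace ℝ (Fin N))‖ := by
  simp [evnorm, EuclideanSpace.norm_eq, sq_abs]

lemma evnorm_nonneg (v : Fin N → ℝ) : 0 ≤ evnorm v := Real.sqrt_nonneg _

lemma dotProduct_self_eq_evnorm_sq (v : Fin N → ℝ) : v ⬝ᵥ v = evnorm v ^ 2 := by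
  rw [evnorm, Real.sq_sqrt (by positivity)]
  simp [dotProduct, sq]

lemma evnorm_sub_le (v w : Fin N → ℝ) : evnorm (v - w) ≤ evnorm v + evnorm w := by
  simpa only [evnorm_eq_norm_toLp, WithLp.toLp_sub] using norm_sub_le _ _

lemma evnorm_le_evnorm_add_evnorm_sub (v w : Fin N → ℝ) :
    evnorm v ≤ evnorm w + evnorm (v - w) := by
  simpa only [evnorm_eq_norm_toLp, WithLp.toLp_sub] using norm_le_norm_add_norm_sub' _ _

lemma abs_dotProduct_le_evnorm_mul (v w : Fin N → ℝ) :
    |v ⬝ᵥ w| ≤ evnorm v * evnorm w := by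
  simpa [EuclideanSpace.inner_toLp_toLp, evnorm_eq_norm_toLp, mul_comm] using
    abs_real_inner_le_norm (WithLp.toLp 2 w : EuclideanSpace ℝ (Fin N)) (WithLp.toLp 2 v)

lemma evnorm_mulVec_le (M : Matrix (Fin N) (Fin N) ℝ) (v : Fin N → ℝ) :
    evnorm (M *ᵥ v) ≤ opNorm M * evnorm v := by
  rw [evnorm_eq_norm_toLp, evnorm_eq_norm_toLp, ← toEuclideanCLM_toLp]
  exact (toEuclideanCLM (𝕜 := ℝ) M).le_opNorm _

lemma evnorm_le_sqrt_card_mul {v : Fin N → ℝ} {ε : ℝ} (hε : 0 ≤ ε) (hv : ∀ i, |v i| ≤ ε) :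
    evnorm v ≤ Real.sqrt N * ε := by
  rw [← Real.sqrt_sq hε, ← Real.sqrt_mul (Nat.cast_nonneg N), evnorm]
  refine Real.sqrt_le_sqrt ?_
  calc ∑ i, v i ^ 2 ≤ ∑ _i : Fin N, ε ^ 2 := Finset.sum_le_sum fun i _ => by
          simpa only [sq_abs] using pow_le_pow_left₀ (abs_nonneg _) (hv i) 2
    _ = N * ε ^ 2 := by simp

end Evnorm

section Coercive

variable {N : ℕ} {M : Matrix (Fin N) (Fin N) ℝ} {lam : ℝ}

lemma isUnit_det_of_coercive (hlam : 0 < lam) (hM : ∀ v, lam * (v ⬝ᵥ v) ≤ v ⬝ᵥ M *ᵥ v) :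
    IsUnit M.det := by
  rw [isUnit_iff_ne_zero, Ne, ← exists_mulVec_eq_zero_iff]
  rintro ⟨v, hv0, hv⟩
  have hvv := hM v
  rw [hv, dotProduct_zero, dotProduct_self_eq_evnorm_sq] at hvv
  have : evnorm v ^ 2 = 0 := le_antisymm (nonpos_of_mul_nonpos_right hvv hlam) (sq_nonneg _)
  exact hv0 (dotProduct_self_eq_zero.mp ((dotProduct_self_eq_evnorm_sq v).trans this))

lemma mul_evnorm_inv_mulVec_le_of_coercive (hlam : 0 < lam)
    (hM : ∀ v, lam * (v ⬝ᵥ v) ≤ v ⬝ᵥ M *ᵥ v) (w : Fin N → ℝ) :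
    lam * evnorm (M⁻¹ *ᵥ w) ≤ evnorm w := by
  set v := M⁻¹ *ᵥ w
  have hMv : M *ᵥ v = w := by
    rw [mulVec_mulVec, mul_nonsing_inv _ (isUnit_det_of_coercive hlam hM), one_mulVec]
  have key : evnorm v * (lam * evnorm v) ≤ evnorm v * evnorm w :=
    calc evnorm v * (lam * evnorm v) = lam * (v ⬝ᵥ v) := by
          rw [dotProduct_self_eq_evnorm_sq]; ring
      _ ≤ v ⬝ᵥ w := hMv ▸ hM v
      _ ≤ evnorm v * evnorm w := (le_abs_self _).trans (abs_dotProduct_le_evnorm_mul v w)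
  rcases (evnorm_nonneg v).eq_or_lt with hv | hv
  · rw [← hv, mul_zero]
    exact evnorm_nonneg w
  · exact le_of_mul_le_mul_left key hv

lemma coercive_add_smul_one {K : Matrix (Fin N) (Fin N) ℝ} (hK : ∀ v, 0 ≤ v ⬝ᵥ K *ᵥ v)
    (lam : ℝ) (v : Fin N → ℝ) : lam * (v ⬝ᵥ v) ≤ v ⬝ᵥ (K + lam • 1) *ᵥ v := by
  rw [add_mulVec, dotProduct_add, smul_mulVec, one_mulVec, dotProduct_smul, smul_eq_mul]
  linarith [hK v]

lemma dotProduct_inv_mulVec_comm (hM : M.IsSymm) (v w : Fin N → ℝ) :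
    v ⬝ᵥ (M⁻¹ *ᵥ w) = (M⁻¹ *ᵥ v) ⬝ᵥ w := by
  rw [dotProduct_mulVec, ← mulVec_transpose, hM.inv.eq]

end Coercive

section Perturbation

variable {N : ℕ} (K : Matrix (Fin N) (Fin N) ℝ) {Kt : Matrix (Fin N) (Fin N) ℝ}
  {k kt : Fin N → ℝ} {lam ε : ℝ}

lemma evnorm_inv_mulVec_sub_le_Cbound (hKt : ∀ v, 0 ≤ v ⬝ᵥ Kt *ᵥ v) (hlam : 0 < lam)
    (hε : 0 ≤ ε) (hk : evnorm (kt - k) ≤ Real.sqrt N * ε) :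
    evnorm ((Kt + lam • 1)⁻¹ *ᵥ kt - (K + lam • 1)⁻¹ *ᵥ k) ≤ Cbound K k lam ε := by
  set a := opNorm (K + lam • 1)⁻¹
  have ha : 0 ≤ a := norm_nonneg _
  have hut : evnorm ((Kt + lam • 1)⁻¹ *ᵥ kt) ≤ 1 / lam * (evnorm k + Real.sqrt N * ε) := by
    rw [one_div_mul_eq_div, le_div_iff₀' hlam]
    calc lam * evnorm ((Kt + lam • 1)⁻¹ *ᵥ kt) ≤ evnorm kt :=
          mul_evnorm_inv_mulVec_le_of_coercive hlam (coercive_add_smul_one hKt lam) kt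
      _ ≤ evnorm k + Real.sqrt N * ε := (evnorm_le_evnorm_add_evnorm_sub kt k).trans (by linarith)
  have hC : Cbound K k lam ε =
      1 / lam * (evnorm k + Real.sqrt N * ε) + a * evnorm k + 2 * (a * (Real.sqrt N * ε)) := by
    rw [Cbound]; ring
  calc _ ≤ evnorm ((Kt + lam • 1)⁻¹ *ᵥ kt) + evnorm ((K + lam • 1)⁻¹ *ᵥ k) := evnorm_sub_le _ _
    _ ≤ 1 / lam * (evnorm k + Real.sqrt N * ε) + a * evnorm k :=
        add_le_add hut (evnorm_mulVec_le _ k)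
    _ ≤ Cbound K k lam ε := by
        have : 0 ≤ a * (Real.sqrt N * ε) := by positivity
        linarith

variable {K}

lemma sub_dotProduct_le_add_Ssq {c ct : ℝ} (hc : |c - ct| ≤ ε)
    (hk : evnorm (kt - k) ≤ Real.sqrt N * ε) (ut : Fin N → ℝ)
    (hut : evnorm (ut - (K + lam • 1)⁻¹ *ᵥ k) ≤ Cbound K k lam ε) :
    ct - kt ⬝ᵥ ut ≤ c - k ⬝ᵥ ((K + lam • 1)⁻¹ *ᵥ k) + Ssq K k lam ε := by
  rw [Ssq]
  set u := (K + lam • 1)⁻¹ *ᵥ k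
  have hsplit : kt ⬝ᵥ ut - k ⬝ᵥ u = (kt - k) ⬝ᵥ u + kt ⬝ᵥ (ut - u) := by
    rw [sub_dotProduct, dotProduct_sub]; ring
  have hkt : evnorm kt ≤ Real.sqrt N * ε + evnorm k := by
    linarith [evnorm_le_evnorm_add_evnorm_sub kt k]
  have h1 : -(Real.sqrt N * ε * evnorm u) ≤ (kt - k) ⬝ᵥ u :=
    neg_le_of_abs_le <| (abs_dotProduct_le_evnorm_mul _ _).trans <|
      mul_le_mul_of_nonneg_right hk (evnorm_nonneg u)
  have h2 : -((Real.sqrt N * ε + evnorm k) * Cbound K k lam ε) ≤ kt ⬝ᵥ (ut - u) :=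
    neg_le_of_abs_le <| (abs_dotProduct_le_evnorm_mul _ _).trans <|
      mul_le_mul hkt hut (evnorm_nonneg _) ((evnorm_nonneg _).trans hkt)
  linarith [neg_le_of_abs_le hc]

end Perturbation

theorem stmt_11_general {N : ℕ} (K Kt : Matrix (Fin N) (Fin N) ℝ)
    (hKsymm : K.IsSymm) (hKtsymm : Kt.IsSymm)
    (hKtpsd : ∀ v : Fin N → ℝ, 0 ≤ v ⬝ᵥ Kt *ᵥ v)
    (lam : ℝ) (hlam : 0 < lam) (ε : ℝ) (hε : 0 ≤ ε)
    (k kt : Fin N → ℝ) (hk : ∀ i, |kt i - k i| ≤ ε)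
    (c ct : ℝ) (hc : |c - ct| ≤ ε)
    (y : Fin N → ℝ) (f : ℝ) (B R : ℝ) (hB : 0 ≤ B) (hR : 0 ≤ R)
    (δ : ℝ)
    (hbound : |kt ⬝ᵥ ((Kt + lam • 1)⁻¹ *ᵥ y) - f| ≤
      B * Real.sqrt (ct - kt ⬝ᵥ ((Kt + lam • 1)⁻¹ *ᵥ kt)) +
        R * evnorm ((Kt + lam • 1)⁻¹ *ᵥ kt) *
          Real.sqrt (N + 2 * Real.sqrt N * Real.sqrt (Real.log (1 / δ)) +
            2 * Real.log (1 / δ))) :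
    |k ⬝ᵥ ((K + lam • 1)⁻¹ *ᵥ y) - f| ≤
      B * Real.sqrt ((c - k ⬝ᵥ ((K + lam • 1)⁻¹ *ᵥ k)) + Ssq K k lam ε) +
        Cbound K k lam ε * evnorm y +
        R * (evnorm ((K + lam • 1)⁻¹ *ᵥ k) + Cbound K k lam ε) *
          Real.sqrt (N + 2 * Real.sqrt N * Real.sqrt (Real.log (1 / δ)) +
            2 * Real.log (1 / δ)) := by
  set W := Real.sqrt (N + 2 * Real.sqrt N * Real.sqrt (Real.log (1 / δ)) + 2 * Real.log (1 / δ))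
  have hW : 0 ≤ W := Real.sqrt_nonneg _
  set u := (K + lam • 1)⁻¹ *ᵥ k
  set ut := (Kt + lam • 1)⁻¹ *ᵥ kt
  have hkt : evnorm (kt - k) ≤ Real.sqrt N * ε :=
    evnorm_le_sqrt_card_mul hε fun i => by simpa only [Pi.sub_apply] using hk i
  have hdiff : evnorm (ut - u) ≤ Cbound K k lam ε :=
    evnorm_inv_mulVec_sub_le_Cbound K hKtpsd hlam hε hkt
  have hmean : |k ⬝ᵥ ((K + lam • 1)⁻¹ *ᵥ y) - kt ⬝ᵥ ((Kt + lam • 1)⁻¹ *ᵥ y)| ≤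
      Cbound K k lam ε * evnorm y := by
    rw [dotProduct_inv_mulVec_comm (hKsymm.add (isSymm_one.smul lam)),
      dotProduct_inv_mulVec_comm (hKtsymm.add (isSymm_one.smul lam)), abs_sub_comm,
      ← sub_dotProduct]
    exact (abs_dotProduct_le_evnorm_mul _ _).trans
      (mul_le_mul_of_nonneg_right hdiff (evnorm_nonneg y))
  have hvar : B * Real.sqrt (ct - kt ⬝ᵥ ut) ≤ B * Real.sqrt ((c - k ⬝ᵥ u) + Ssq K k lam ε) := by
    gcongr
    exact sub_dotProduct_le_add_Ssq hc hkt ut hdiff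
  have hweight : R * evnorm ut * W ≤ R * (evnorm u + Cbound K k lam ε) * W := by
    gcongr
    linarith [evnorm_le_evnorm_add_evnorm_sub ut u]
  linarith [abs_sub_le (k ⬝ᵥ ((K + lam • 1)⁻¹ *ᵥ y)) (kt ⬝ᵥ ((Kt + lam • 1)⁻¹ *ᵥ y)) f]

theorem stmt_11 {N : ℕ} (hN : 0 < N) (K Kt : Matrix (Fin N) (Fin N) ℝ)
    (hKsymm : K.IsSymm) (hKtsymm : Kt.IsSymm)
    (hKpsd : ∀ v : Fin N → ℝ, 0 ≤ v ⬝ᵥ K *ᵥ v)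
    (hKtpsd : ∀ v : Fin N → ℝ, 0 ≤ v ⬝ᵥ Kt *ᵥ v)
    (lam : ℝ) (hlam : 0 < lam) (ε : ℝ) (hε : 0 ≤ ε)
    (k kt : Fin N → ℝ) (hk : ∀ i, |kt i - k i| ≤ ε)
    (c ct : ℝ) (hc : |c - ct| ≤ ε)
    (y : Fin N → ℝ) (f : ℝ) (B R : ℝ) (hB : 0 ≤ B) (hR : 0 ≤ R)
    (δ : ℝ) (hδ : δ ∈ Set.Ioo (0 : ℝ) 1)
    (hvar : 0 ≤ ct - kt ⬝ᵥ ((Kt + lam • 1)⁻¹ *ᵥ kt))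
    (hbound : |kt ⬝ᵥ ((Kt + lam • 1)⁻¹ *ᵥ y) - f| ≤
      B * Real.sqrt (ct - kt ⬝ᵥ ((Kt + lam • 1)⁻¹ *ᵥ kt)) +
        R * evnorm ((Kt + lam • 1)⁻¹ *ᵥ kt) *
          Real.sqrt (N + 2 * Real.sqrt N * Real.sqrt (Real.log (1 / δ)) +
            2 * Real.log (1 / δ))) :
    |k ⬝ᵥ ((K + lam • 1)⁻¹ *ᵥ y) - f| ≤
      B * Real.sqrt ((c - k ⬝ᵥ ((K + lam • 1)⁻¹ *ᵥ k)) + Ssq K k lam ε) +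
        Cbound K k lam ε * evnorm y +
        R * (evnorm ((K + lam • 1)⁻¹ *ᵥ k) + Cbound K k lam ε) *
          Real.sqrt (N + 2 * Real.sqrt N * Real.sqrt (Real.log (1 / δ)) +
            2 * Real.log (1 / δ)) :=
  stmt_11_general K Kt hKsymm hKtsymm hKtpsd lam hlam ε hε k kt hk c ct hc y f B R hB hR δ hbound
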